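/- Let a, b be real numbers, and let M be the 3×3 real matrix whose rows are (1+a, 1+a, 1+a), (1−b, 1−b, 1−b), (b−a, b−a, b−a). If (1+a)(1−b)(b−a) ≠ 0, (1+a)(1−b)(2+a−b) > 0 and (b−a)(2+a−b) > 0, then the evolution algebra E_M is isomorphic to the evolution algebra E₇ whose structure matrix has rows (1,0,0), (1,0,0), (1,0,0). -/

import Mathlib

/-- Evolution algebra multiplication on ℝ³ determined by a structure matrix `A`:
`(x ∗_A y) j = ∑ i, x i * y i * A i j`. -/
def evolMul (A : Matrix (Fin 3) (Fin 3) ℝ) (x y : Fin 3 → ℝ) : Fin 3 → ℝ :=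
  fun j => ∑ i, x i * y i * A i j

/-- The evolution algebras with structure matrices `A` and `B` are isomorphic:
there is an ℝ-linear equivalence of ℝ³ intertwining the two multiplications. -/
def EvolIso (A B : Matrix (Fin 3) (Fin 3) ℝ) : Prop :=
  ∃ f : (Fin 3 → ℝ) ≃ₗ[ℝ] (Fin 3 → ℝ),
    ∀ x y, f (evolMul A x y) = evolMul B (f x) (f y)

/-!
Both structure matrices have rank one: `E_M` has `x * y = B(x, y) • u` with `u = (1, 1, 1)` and
`B` the diagonal form of weights `w = (1 + a, 1 - b, b - a)`, and `E₇` has `x * y = (x ⬝ᵥ y) • e₀`.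
A linear `f` with `f u = c • e₀` and `f x ⬝ᵥ f y = c * B(x, y)` is therefore an isomorphism;
evaluating at `x = y = u` forces `c = B(u, u) = ∑ wᵢ = 2`. The hypotheses make the weights positive,
so scaling coordinate `i` by `√(2 wᵢ)` turns `2B` into the dot product and `u` into a vector of
length `2`, and a Householder reflection then moves that vector to `2 • e₀`.
-/

open Matrix

section Orthogonal

variable {ι : Type*} [Fintype ι]

theorem exists_linearEquiv_apply_eq_of_dotProduct_self_eq {p q : ι → ℝ} (h : p ⬝ᵥ p = q ⬝ᵥ q) :
    ∃ R : (ι → ℝ) ≃ₗ[ℝ] (ι → ℝ), R p = q ∧ ∀ x y, R x ⬝ᵥ R y = x ⬝ᵥ y := by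
  let E := WithLp.linearEquiv 2 ℝ (ι → ℝ)
  have inner_eq (x y : ι → ℝ) : inner ℝ (E.symm x) (E.symm y) = x ⬝ᵥ y := by
    simp [E, PiLp.inner_apply, dotProduct, mul_comm]
  have hnorm : ‖E.symm p‖ = ‖E.symm q‖ := by
    rw [← sq_eq_sq₀ (norm_nonneg _) (norm_nonneg _), ← real_inner_self_eq_norm_sq,
      ← real_inner_self_eq_norm_sq, inner_eq, inner_eq, h]
  let R := Submodule.reflection (ℝ ∙ (E.symm p - E.symm q))ᗮ
  refine ⟨E.symm ≪≫ₗ R.toLinearEquiv ≪≫ₗ E, ?_, fun x y => ?_⟩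
  · simp [R, Submodule.reflection_sub hnorm]
  · rw [← inner_eq, ← inner_eq]
    simp

theorem exists_linearEquiv_apply_eq_of_weighted_sum_self_eq {w u q : ι → ℝ} (hw : ∀ i, 0 < w i)
    (h : ∑ i, u i * u i * w i = q ⬝ᵥ q) :
    ∃ f : (ι → ℝ) ≃ₗ[ℝ] (ι → ℝ), f u = q ∧ ∀ x y, f x ⬝ᵥ f y = ∑ i, x i * y i * w i := by
  have hs (i : ι) : √(w i) ≠ 0 := (Real.sqrt_pos.2 (hw i)).ne'
  let D := LinearEquiv.piCongrRight fun i => LinearEquiv.smulOfNeZero ℝ ℝ _ (hs i)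
  have hD (x y : ι → ℝ) : D x ⬝ᵥ D y = ∑ i, x i * y i * w i := by
    refine Finset.sum_congr rfl fun i _ => ?_
    simp only [D, LinearEquiv.piCongrRight_apply, LinearEquiv.smulOfNeZero_apply, smul_eq_mul]
    linear_combination x i * y i * Real.mul_self_sqrt (hw i).le
  obtain ⟨R, hRq, hR⟩ := exists_linearEquiv_apply_eq_of_dotProduct_self_eq (p := D u) (q := q)
    (by rw [hD, h])
  exact ⟨D ≪≫ₗ R, hRq, fun x y => (hR _ _).trans (hD x y)⟩

end Orthogonal

theorem evolMul_vecMulVec (w v x y : Fin 3 → ℝ) :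
    evolMul (vecMulVec w v) x y = (∑ i, x i * y i * w i) • v := by
  ext j
  simp [evolMul, vecMulVec_apply, Finset.sum_mul, mul_assoc]

theorem evolIso_vecMulVec_of_linearEquiv {w v w' v' : Fin 3 → ℝ}
    (f : (Fin 3 → ℝ) ≃ₗ[ℝ] (Fin 3 → ℝ)) (c : ℝ) (hv : f v = c • v')
    (hf : ∀ x y, c * ∑ i, x i * y i * w i = ∑ i, f x i * f y i * w' i) :
    EvolIso (vecMulVec w v) (vecMulVec w' v') :=
  ⟨f, fun x y => by rw [evolMul_vecMulVec, evolMul_vecMulVec, map_smul, hv, smul_smul, mul_comm, hf]⟩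

theorem evolIso_vecMulVec_one_single {w : Fin 3 → ℝ} (hw : ∀ i, 0 < w i) (hsum : ∑ i, w i = 2) :
    EvolIso (vecMulVec w 1) (vecMulVec 1 (Pi.single 0 1)) := by
  have hlen : ∑ i, (1 : Fin 3 → ℝ) i * (1 : Fin 3 → ℝ) i * ((2 : ℝ) • w) i =
      ((2 : ℝ) • Pi.single 0 1 : Fin 3 → ℝ) ⬝ᵥ ((2 : ℝ) • Pi.single 0 1) := by
    simp [dotProduct, ← Finset.mul_sum, hsum, Fin.sum_univ_three]
  obtain ⟨f, hf1, hf⟩ :=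
    exists_linearEquiv_apply_eq_of_weighted_sum_self_eq (fun i => by simpa using hw i) hlen
  refine evolIso_vecMulVec_of_linearEquiv f 2 hf1 fun x y => ?_
  calc 2 * ∑ i, x i * y i * w i = ∑ i, x i * y i * ((2 : ℝ) • w) i := by
        rw [Finset.mul_sum]
        exact Finset.sum_congr rfl fun i _ => by simp only [Pi.smul_apply, smul_eq_mul]; ring
    _ = f x ⬝ᵥ f y := (hf x y).symm
    _ = ∑ i, f x i * f y i * (1 : Fin 3 → ℝ) i := by simp [dotProduct]

theorem stmt_general (a b : ℝ)
    (h2 : (1 + a) * (1 - b) * (2 + a - b) > 0)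
    (h3 : (b - a) * (2 + a - b) > 0) :
    EvolIso (!![1 + a, 1 + a, 1 + a; 1 - b, 1 - b, 1 - b; b - a, b - a, b - a] : Matrix (Fin 3) (Fin 3) ℝ) (!![1, 0, 0; 1, 0, 0; 1, 0, 0] : Matrix (Fin 3) (Fin 3) ℝ) := by
  have hαβ : 0 < 2 + a - b := by nlinarith
  have hγ : 0 < b - a := pos_of_mul_pos_left h3 hαβ.le
  have hprod : 0 < (1 + a) * (1 - b) := pos_of_mul_pos_left h2 hαβ.le
  have hα : 0 < 1 + a := by nlinarith
  have hβ : 0 < 1 - b := by nlinarith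
  have hM : !![1 + a, 1 + a, 1 + a; 1 - b, 1 - b, 1 - b; b - a, b - a, b - a] =
      vecMulVec ![1 + a, 1 - b, b - a] 1 := by
    ext i j; fin_cases i <;> fin_cases j <;> simp [vecMulVec_apply]
  have hE : (!![1, 0, 0; 1, 0, 0; 1, 0, 0] : Matrix (Fin 3) (Fin 3) ℝ) =
      vecMulVec 1 (Pi.single 0 1) := by
    ext i j; fin_cases i <;> fin_cases j <;> simp [vecMulVec_apply]
  rw [hM, hE]
  refine evolIso_vecMulVec_one_single (fun i => ?_) ?_
  · fin_cases i <;> assumption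
  · simp only [Fin.sum_univ_three, Fin.isValue, cons_val_zero, cons_val_one, cons_val]
    ring

theorem stmt (a b : ℝ)
    (h1 : (1 + a) * (1 - b) * (b - a) ≠ 0)
    (h2 : (1 + a) * (1 - b) * (2 + a - b) > 0)
    (h3 : (b - a) * (2 + a - b) > 0) :
    EvolIso (!![1 + a, 1 + a, 1 + a; 1 - b, 1 - b, 1 - b; b - a, b - a, b - a] : Matrix (Fin 3) (Fin 3) ℝ) (!![1, 0, 0; 1, 0, 0; 1, 0, 0] : Matrix (Fin 3) (Fin 3) ℝ) :=
  stmt_general a b h2 h3
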